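/- arXiv:2105.11100 — 6 statements merged into one kernel-verified Lean document; each statement's English description precedes it below -/
import Mathlib

section
/- Let ω ∈ ℝ, let λu : 𝕋 → ℝ be continuous with sup_{θ} |λu(θ)⁻¹| < 1 (in particular λu(θ) ≠ 0 for all θ), and let η : 𝕋 → ℝ be continuous. Then there exists a unique continuous ξ : 𝕋 → ℝ satisfying η(θ) = λu(θ)ξ(θ) − ξ(θ+ω) for all θ, and it is obtained as the fixed point of the contraction B defined by [B(f)](θ) = λu(θ)⁻¹(η(θ) + f(θ+ω)). -/
/-!
Writing `a = λu⁻¹`, the map `B f = a * (η + f ∘ (· + ω))` is affine with linear part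
`f ↦ a * (f ∘ (· + ω))`, whose sup-norm Lipschitz constant is at most `‖a‖ = sup |λu⁻¹| < 1`;
by Banach's theorem `B` has a unique fixed point, and since `λu` never vanishes the fixed points
of `B` are exactly the solutions of `η(θ) = λu(θ) ξ(θ) − ξ(θ + ω)`.
-/

open scoped Real

instance : Fact (0 < 2 * Real.pi) := ⟨by positivity⟩

namespace ContinuousMap

variable {X : Type*} [TopologicalSpace X] [CompactSpace X]

theorem norm_comp_le (f : C(X, ℝ)) (τ : C(X, X)) : ‖f.comp τ‖ ≤ ‖f‖ :=
  (norm_le _ (norm_nonneg f)).2 fun x => f.norm_coe_le_norm (τ x)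

theorem contractingWith_mul_add_comp (a c : C(X, ℝ)) (τ : C(X, X)) (ha : ‖a‖₊ < 1) :
    ContractingWith ‖a‖₊ fun f : C(X, ℝ) => a * (c + f.comp τ) := by
  refine ⟨ha, LipschitzWith.of_dist_le_mul fun f g => ?_⟩
  calc dist (a * (c + f.comp τ)) (a * (c + g.comp τ)) = ‖a * (f - g).comp τ‖ := by
        rw [dist_eq_norm, ← mul_sub, add_sub_add_left_eq_sub, sub_comp]
    _ ≤ ‖a‖ * ‖(f - g).comp τ‖ := norm_mul_le _ _
    _ ≤ ‖a‖ * dist f g := by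
        rw [dist_eq_norm]
        exact mul_le_mul_of_nonneg_left (norm_comp_le _ _) (norm_nonneg a)

end ContinuousMap

theorem inv_mul_add_eq_iff_eq_mul_sub {u e y x : ℝ} (hu : u ≠ 0) :
    u⁻¹ * (e + y) = x ↔ e = u * x - y := by
  rw [inv_mul_eq_iff_eq_mul₀ hu, eq_sub_iff_add_eq, eq_comm]

/-- if `sup |λu⁻¹| < 1` (and `λu` never vanishes), then there is a unique
continuous `ξ` with `η(θ) = λu(θ) ξ(θ) − ξ(θ+ω)`, obtained as the fixed point of the
contraction `B f (θ) = λu(θ)⁻¹ (η(θ) + f(θ+ω))`. -/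
theorem stmt1 (ω : ℝ)
    (lamu η : C(AddCircle (2 * Real.pi), ℝ))
    (hne : ∀ θ, lamu θ ≠ 0)
    (hC1 : (⨆ θ : AddCircle (2 * Real.pi), |(lamu θ)⁻¹|) < 1)
    (B : C(AddCircle (2 * Real.pi), ℝ) → C(AddCircle (2 * Real.pi), ℝ))
    (hB : ∀ (f : C(AddCircle (2 * Real.pi), ℝ)) (θ : AddCircle (2 * Real.pi)),
      B f θ = (lamu θ)⁻¹ * (η θ + f (θ + (ω : AddCircle (2 * Real.pi))))) :
    ∃ ξ : C(AddCircle (2 * Real.pi), ℝ),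
      (∀ θ, η θ = lamu θ * ξ θ - ξ (θ + (ω : AddCircle (2 * Real.pi)))) ∧
      B ξ = ξ ∧
      ∀ ζ : C(AddCircle (2 * Real.pi), ℝ),
        (∀ θ, η θ = lamu θ * ζ θ - ζ (θ + (ω : AddCircle (2 * Real.pi)))) → ζ = ξ := by
  set T := AddCircle (2 * Real.pi)
  let a : C(T, ℝ) := ⟨fun θ => (lamu θ)⁻¹, lamu.continuous.inv₀ hne⟩
  have ha : ‖a‖₊ < 1 := by
    rw [← NNReal.coe_lt_coe, coe_nnnorm, NNReal.coe_one, ContinuousMap.norm_eq_iSup_norm]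
    exact hC1
  have hB_eq : B = fun f => a * (η + f.comp (ContinuousMap.addRight (ω : T))) :=
    funext fun f => ContinuousMap.ext (hB f)
  have hB_contr : ContractingWith ‖a‖₊ B :=
    hB_eq ▸ ContinuousMap.contractingWith_mul_add_comp a η _ ha
  have isFixedPt_iff (ζ : C(T, ℝ)) :
      B ζ = ζ ↔ ∀ θ, η θ = lamu θ * ζ θ - ζ (θ + (ω : T)) := by
    simp only [ContinuousMap.ext_iff, hB, inv_mul_add_eq_iff_eq_mul_sub (hne _)]
  have : Nonempty C(T, ℝ) := ⟨η⟩
  have hfix := hB_contr.fixedPoint_isFixedPt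
  exact ⟨_, (isFixedPt_iff _).1 hfix, hfix,
    fun ζ hζ => hB_contr.fixedPoint_unique ((isFixedPt_iff ζ).2 hζ)⟩
end

section
/- Let F : ℝ⁴ → ℝ⁴ be a symplectic diffeomorphism with respect to the standard symplectic form Ω(v₁,v₂) = v₁ᵀ J v₂ (J the standard 4×4 symplectic matrix), with invariant circle K satisfying F(K(θ)) = K(θ+ω), K of class C¹. Suppose v_s : 𝕋 → ℝ⁴ and continuous λs : 𝕋 → ℝ satisfy DF(K(θ)) v_s(θ) = λs(θ) v_s(θ+ω) with L := sup_θ |λs(θ)| < 1. Then Ω(DK(θ), v_s(θ)) = 0 for all θ ∈ 𝕋. -/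
open scoped Real
open Matrix

/-- The standard `4×4` symplectic matrix `J = [[0, I₂],[−I₂, 0]]`. -/
def J4 : Matrix (Fin 4) (Fin 4) ℝ :=
  !![0, 0, 1, 0; 0, 0, 0, 1; -1, 0, 0, 0; 0, -1, 0, 0]

/-!
Write `g θ = Ω(DK(θ), v_s(θ))`. Differentiating `F ∘ K = K(· + ω)` gives `DF(K θ) DK(θ) = DK(θ + ω)`,
so symplecticity of `DF` and `DF(K θ) v_s(θ) = λs(θ) v_s(θ + ω)` yield `g θ = λs(θ) g(θ + ω)`.
Since `g` is continuous and periodic it is bounded, and then `sup |g| ≤ L sup |g|` with `L < 1`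
forces `g = 0`.
-/

open Function Set

theorem eq_zero_of_eq_smul_comp {α E : Type*} [NormedAddCommGroup E] [NormedSpace ℝ E]
    {g : α → E} {σ : α → α} {c : α → ℝ} {L : ℝ} (hg : BddAbove (range fun x => ‖g x‖))
    (hc : ∀ x, |c x| ≤ L) (hL : L < 1) (hgc : ∀ x, g x = c x • g (σ x)) (x : α) :
    g x = 0 := by
  have : Nonempty α := ⟨x⟩
  set M := ⨆ y, ‖g y‖
  have hle_M : ∀ y, ‖g y‖ ≤ M := le_ciSup hg
  have hM_le : M ≤ L * M := ciSup_le fun y => calc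
    ‖g y‖ = |c y| * ‖g (σ y)‖ := by rw [hgc y, norm_smul, Real.norm_eq_abs]
    _ ≤ L * M := mul_le_mul (hc y) (hle_M _) (norm_nonneg _) ((abs_nonneg _).trans (hc y))
  have hM : M ≤ 0 := by nlinarith [(norm_nonneg (g x)).trans (hle_M x)]
  exact norm_le_zero_iff.1 ((hle_M x).trans hM)

theorem Function.Periodic.deriv {E : Type*} [NormedAddCommGroup E] [NormedSpace ℝ E]
    {f : ℝ → E} {c : ℝ} (hf : Periodic f c) : Periodic (deriv f) c := fun x => by
  rw [← deriv_comp_add_const, funext hf]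

theorem Function.Periodic.bddAbove_range_of_continuous {α : Type*} [LinearOrder α]
    [TopologicalSpace α] [ClosedIciTopology α] [Nonempty α] {f : ℝ → α} {c : ℝ} (hf : Periodic f c)
    (hc : c ≠ 0) (hcont : Continuous f) : BddAbove (range f) :=
  (hf.compact_of_continuous hc hcont).bddAbove

theorem fderiv_apply_deriv_of_comp_eq_comp_add_const {E : Type*} [NormedAddCommGroup E]
    [NormedSpace ℝ E] {F : E → E} {K : ℝ → E} {ω θ : ℝ} (hF : DifferentiableAt ℝ F (K θ))
    (hK : DifferentiableAt ℝ K θ) (hinv : ∀ t, F (K t) = K (t + ω)) :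
    fderiv ℝ F (K θ) (deriv K θ) = deriv K (θ + ω) := calc
  fderiv ℝ F (K θ) (deriv K θ) = deriv (F ∘ K) θ :=
    (hF.hasFDerivAt.comp_hasDerivAt θ hK.hasDerivAt).deriv.symm
  _ = deriv K (θ + ω) := by rw [show F ∘ K = fun t => K (t + ω) from funext hinv,
    deriv_comp_add_const]

theorem stmt5_general (ω : ℝ)
    (F : (Fin 4 → ℝ) → (Fin 4 → ℝ)) (hF : ContDiff ℝ 1 F)
    (hsymp : ∀ (x v₁ v₂ : Fin 4 → ℝ),
      (fderiv ℝ F x v₁) ⬝ᵥ J4.mulVec (fderiv ℝ F x v₂) = v₁ ⬝ᵥ J4.mulVec v₂)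
    (K : ℝ → (Fin 4 → ℝ)) (hK : ContDiff ℝ 1 K)
    (hKper : Function.Periodic K (2 * Real.pi))
    (hinv : ∀ θ, F (K θ) = K (θ + ω))
    (vs : ℝ → (Fin 4 → ℝ)) (hvsc : Continuous vs)
    (hvsper : Function.Periodic vs (2 * Real.pi))
    (lams : ℝ → ℝ) (hlamsc : Continuous lams)
    (hlamsper : Function.Periodic lams (2 * Real.pi))
    (hvs : ∀ θ, fderiv ℝ F (K θ) (vs θ) = lams θ • vs (θ + ω))
    (hL : (⨆ θ : ℝ, |lams θ|) < 1) :
    ∀ θ, deriv K θ ⬝ᵥ J4.mulVec (vs θ) = 0 := by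
  have h2π : 2 * π ≠ 0 := Real.two_pi_pos.ne'
  have hg_eq : ∀ θ, deriv K θ ⬝ᵥ J4 *ᵥ vs θ = lams θ • (deriv K (θ + ω) ⬝ᵥ J4 *ᵥ vs (θ + ω)) :=
    fun θ => by
      rw [← hsymp (K θ), fderiv_apply_deriv_of_comp_eq_comp_add_const
        (hF.differentiable one_ne_zero _) (hK.differentiable one_ne_zero θ) hinv, hvs,
        mulVec_smul, dotProduct_smul]
  have hg_per : Periodic (fun θ => ‖deriv K θ ⬝ᵥ J4 *ᵥ vs θ‖) (2 * π) := fun θ => by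
    simp only [hKper.deriv θ, hvsper θ]
  have hg_bdd := hg_per.bddAbove_range_of_continuous h2π
    ((hK.continuous_deriv le_rfl).dotProduct (continuous_const.matrix_mulVec hvsc)).norm
  have hlams_le : ∀ θ, |lams θ| ≤ ⨆ θ, |lams θ| :=
    le_ciSup ((hlamsper.comp abs).bddAbove_range_of_continuous h2π hlamsc.abs)
  exact eq_zero_of_eq_smul_comp hg_bdd hlams_le hL hg_eq

/-- for a symplectic `C¹` diffeomorphism `F` with invariant circle `K` and
stable bundle `v_s` with `sup |λs| < 1`, the symplectic form of `DK(θ)` and `v_s(θ)`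
vanishes identically. -/
theorem stmt5 (ω : ℝ)
    (F : (Fin 4 → ℝ) → (Fin 4 → ℝ)) (hF : ContDiff ℝ 1 F) (hFbij : Function.Bijective F)
    (hsymp : ∀ (x v₁ v₂ : Fin 4 → ℝ),
      (fderiv ℝ F x v₁) ⬝ᵥ J4.mulVec (fderiv ℝ F x v₂) = v₁ ⬝ᵥ J4.mulVec v₂)
    (K : ℝ → (Fin 4 → ℝ)) (hK : ContDiff ℝ 1 K)
    (hKper : Function.Periodic K (2 * Real.pi))
    (hinv : ∀ θ, F (K θ) = K (θ + ω))
    (vs : ℝ → (Fin 4 → ℝ)) (hvsc : Continuous vs)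
    (hvsper : Function.Periodic vs (2 * Real.pi))
    (lams : ℝ → ℝ) (hlamsc : Continuous lams)
    (hlamsper : Function.Periodic lams (2 * Real.pi))
    (hvs : ∀ θ, fderiv ℝ F (K θ) (vs θ) = lams θ • vs (θ + ω))
    (hL : (⨆ θ : ℝ, |lams θ|) < 1) :
    ∀ θ, deriv K θ ⬝ᵥ J4.mulVec (vs θ) = 0 :=
  stmt5_general ω F hF hsymp K hK hKper hinv vs hvsc hvsper lams hlamsc hlamsper hvs hL
end

section
/- With the assumptions of the previous statement, suppose further that f₁, f₂ : 𝕋 → ℝ solve C(θ) = f₁(θ+ω) − λs(θ)f₁(θ) and D(θ) = f₂(θ+ω) − λu(θ)f₂(θ). Then v_c(θ) := J⁻¹DK(θ)/‖DK(θ)‖² + f₁(θ)v_s(θ) + f₂(θ)v_u(θ) satisfies DF(K(θ)) v_c(θ) = T(θ) DK(θ+ω) + v_c(θ+ω) with T(θ) = A(θ); i.e., v_c is a symplectic conjugate center direction to DK. -/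
/-!
Differentiating the invariance `F ∘ K = K ∘ (· + ω)` shows that `DF` maps `DK(θ)` to
`DK(θ + ω)`. Since `DF` preserves the form `x ⬝ᵥ J y`, the pairing `g(θ) = v(θ) ⬝ᵥ J DK(θ)` of
either hyperbolic bundle with the tangent satisfies `g(θ) = λ(θ) g(θ + ω)`; being bounded, it must
vanish, by iterating forwards in the contracting case and backwards in the expanding one. Pairing
the decomposition with `J DK(θ + ω)` then gives `B ≡ 1`, and the cohomological equations for
`f₁, f₂` absorb the `v_s, v_u` components.
-/

open scoped Real
open Matrix

open Function Filter Topology Bornology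

lemma J4_mul_neg_J4 : J4 * -J4 = 1 := by
  ext i j
  fin_cases i <;> fin_cases j <;>
    simp [J4, mul_apply, Fin.sum_univ_four, one_apply]

lemma J4_inv : J4⁻¹ = -J4 := inv_eq_right_inv J4_mul_neg_J4

lemma dotProduct_J4_mulVec_self (w : Fin 4 → ℝ) : w ⬝ᵥ J4 *ᵥ w = 0 := by
  simp only [J4, mulVec, dotProduct, Fin.sum_univ_four, of_apply, cons_val', cons_val_fin_one,
    cons_val_zero, cons_val_one, cons_val]
  ring

lemma J4_mulVec_dotProduct_J4_mulVec_self (w : Fin 4 → ℝ) : J4 *ᵥ w ⬝ᵥ J4 *ᵥ w = w ⬝ᵥ w := by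
  simp only [J4, mulVec, dotProduct, Fin.sum_univ_four, of_apply, cons_val', cons_val_fin_one,
    cons_val_zero, cons_val_one, cons_val]
  ring

lemma smul_J4_inv_mulVec_dotProduct_J4_mulVec {w : Fin 4 → ℝ} (hw : w ≠ 0) :
    ((w ⬝ᵥ w)⁻¹ • (J4⁻¹ *ᵥ w)) ⬝ᵥ J4 *ᵥ w = -1 := by
  rw [smul_dotProduct, J4_inv, neg_mulVec, neg_dotProduct,
    J4_mulVec_dotProduct_J4_mulVec_self, smul_eq_mul, mul_neg,
    inv_mul_cancel₀ (dotProduct_self_eq_zero.not.mpr hw)]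

theorem eq_zero_of_norm_le_mul_comp {α E : Type*} [NormedAddCommGroup E] {g : α → E}
    {σ : α → α} {c : ℝ} (hc₀ : 0 ≤ c) (hc₁ : c < 1) (hg : IsBounded (Set.range g))
    (h : ∀ x, ‖g x‖ ≤ c * ‖g (σ x)‖) : g = 0 := by
  obtain ⟨M, hM⟩ := isBounded_iff_forall_norm_le.mp hg
  have hpow : ∀ n : ℕ, ∀ x, ‖g x‖ ≤ c ^ n * M := by
    intro n
    induction n with
    | zero => simpa using fun x => hM _ ⟨x, rfl⟩
    | succ n ih =>
      intro x
      calc ‖g x‖ ≤ c * ‖g (σ x)‖ := h x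
        _ ≤ c * (c ^ n * M) := by gcongr; exact ih _
        _ = c ^ (n + 1) * M := by ring
  have hlim : Tendsto (fun n : ℕ => c ^ n * M) atTop (𝓝 0) := by
    simpa using (tendsto_pow_atTop_nhds_zero_of_lt_one hc₀ hc₁).mul_const M
  funext x
  exact norm_le_zero_iff.mp (ge_of_tendsto' hlim fun n => hpow n x)

theorem eq_zero_of_eq_mul_shift_of_abs_le {g μ : ℝ → ℝ} {ω c : ℝ} (hc : c < 1)
    (hg : IsBounded (Set.range g)) (hμ : ∀ θ, |μ θ| ≤ c) (h : ∀ θ, g θ = μ θ * g (θ + ω)) :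
    g = 0 :=
  eq_zero_of_norm_le_mul_comp ((abs_nonneg _).trans (hμ 0)) hc hg (σ := (· + ω)) fun θ => by
    rw [Real.norm_eq_abs, Real.norm_eq_abs, h θ, abs_mul]
    gcongr
    exact hμ θ

theorem eq_zero_of_eq_mul_shift_of_le_abs {g μ : ℝ → ℝ} {ω c : ℝ} (hc : 1 < c)
    (hg : IsBounded (Set.range g)) (hμ : ∀ θ, c ≤ |μ θ|) (h : ∀ θ, g θ = μ θ * g (θ + ω)) :
    g = 0 := by
  have hc₀ : 0 < c := one_pos.trans hc
  refine eq_zero_of_norm_le_mul_comp (inv_nonneg.mpr hc₀.le) (inv_lt_one_of_one_lt₀ hc) hg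
    (σ := (· - ω)) fun θ => ?_
  rw [Real.norm_eq_abs, Real.norm_eq_abs, le_inv_mul_iff₀ hc₀, h (θ - ω), sub_add_cancel,
    abs_mul]
  gcongr
  exact hμ _

theorem fderiv_apply_deriv_of_comp_eq_comp_add {E : Type*} [NormedAddCommGroup E]
    [NormedSpace ℝ E] {F : E → E} {K : ℝ → E} {ω θ : ℝ} (hF : DifferentiableAt ℝ F (K θ))
    (hK : DifferentiableAt ℝ K θ) (hinv : ∀ θ, F (K θ) = K (θ + ω)) :
    fderiv ℝ F (K θ) (deriv K θ) = deriv K (θ + ω) := by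
  have h := (hF.hasFDerivAt.comp_hasDerivAt θ hK.hasDerivAt).deriv
  rw [show F ∘ K = fun t => K (t + ω) from funext hinv, deriv_comp_add_const] at h
  exact h.symm

theorem dotProduct_mulVec_deriv_eq_mul_shift {n : Type*} [Fintype n] {Ω : Matrix n n ℝ}
    {F : (n → ℝ) → n → ℝ} {K : ℝ → n → ℝ} {ω : ℝ}
    (hsymp : ∀ x v₁ v₂, fderiv ℝ F x v₁ ⬝ᵥ Ω *ᵥ fderiv ℝ F x v₂ = v₁ ⬝ᵥ Ω *ᵥ v₂)
    (hDFK : ∀ θ, fderiv ℝ F (K θ) (deriv K θ) = deriv K (θ + ω)) {v : ℝ → n → ℝ} {μ : ℝ → ℝ}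
    (hv : ∀ θ, fderiv ℝ F (K θ) (v θ) = μ θ • v (θ + ω)) (θ : ℝ) :
    v θ ⬝ᵥ Ω *ᵥ deriv K θ = μ θ * (v (θ + ω) ⬝ᵥ Ω *ᵥ deriv K (θ + ω)) := by
  rw [← hsymp (K θ), hv, hDFK, smul_dotProduct, smul_eq_mul]

theorem isBounded_range_dotProduct_mulVec {n : Type*} [Fintype n] (Ω : Matrix n n ℝ)
    {v w : ℝ → n → ℝ} {T : ℝ} (hT : T ≠ 0) (hv : Continuous v) (hw : Continuous w)
    (hvT : Periodic v T) (hwT : Periodic w T) :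
    IsBounded (Set.range fun θ => v θ ⬝ᵥ Ω *ᵥ w θ) :=
  Periodic.isBounded_of_continuous (fun θ => by simp only [hvT θ, hwT θ]) hT
    (hv.dotProduct (continuous_const.matrix_mulVec hw))

theorem stmt8_general (ω : ℝ)
    (F : (Fin 4 → ℝ) → (Fin 4 → ℝ)) (hF : ContDiff ℝ 1 F)
    (hsymp : ∀ (x v₁ v₂ : Fin 4 → ℝ),
      (fderiv ℝ F x v₁) ⬝ᵥ J4.mulVec (fderiv ℝ F x v₂) = v₁ ⬝ᵥ J4.mulVec v₂)
    (K : ℝ → (Fin 4 → ℝ)) (hK : ContDiff ℝ 1 K)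
    (hKper : Function.Periodic K (2 * Real.pi))
    (hinv : ∀ θ, F (K θ) = K (θ + ω))
    (hDK : ∀ θ, deriv K θ ≠ 0)
    (vs : ℝ → (Fin 4 → ℝ)) (hvsc : Continuous vs)
    (hvsper : Function.Periodic vs (2 * Real.pi))
    (lams : ℝ → ℝ) (hlamsc : Continuous lams)
    (hlamsper : Function.Periodic lams (2 * Real.pi))
    (hvs : ∀ θ, fderiv ℝ F (K θ) (vs θ) = lams θ • vs (θ + ω))
    (hL : (⨆ θ : ℝ, |lams θ|) < 1)
    (vu : ℝ → (Fin 4 → ℝ)) (hvuc : Continuous vu)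
    (hvuper : Function.Periodic vu (2 * Real.pi))
    (lamu : ℝ → ℝ)
    (hvu : ∀ θ, fderiv ℝ F (K θ) (vu θ) = lamu θ • vu (θ + ω))
    (hLu : 1 < ⨅ θ : ℝ, |lamu θ|)
    (A B Cf Df : ℝ → ℝ)
    (hdecomp : ∀ θ,
      fderiv ℝ F (K θ) ((deriv K θ ⬝ᵥ deriv K θ)⁻¹ • (J4⁻¹.mulVec (deriv K θ)))
        = A θ • deriv K (θ + ω)
          + B θ • ((deriv K (θ + ω) ⬝ᵥ deriv K (θ + ω))⁻¹ • (J4⁻¹.mulVec (deriv K (θ + ω))))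
          + Cf θ • vs (θ + ω) + Df θ • vu (θ + ω))
    (f₁ f₂ : ℝ → ℝ)
    (hf₁ : ∀ θ, Cf θ = f₁ (θ + ω) - lams θ * f₁ θ)
    (hf₂ : ∀ θ, Df θ = f₂ (θ + ω) - lamu θ * f₂ θ)
    (vc : ℝ → (Fin 4 → ℝ))
    (hvcdef : ∀ θ, vc θ = (deriv K θ ⬝ᵥ deriv K θ)⁻¹ • (J4⁻¹.mulVec (deriv K θ))
      + f₁ θ • vs θ + f₂ θ • vu θ) :
    ∀ θ, fderiv ℝ F (K θ) (vc θ) = A θ • deriv K (θ + ω) + vc (θ + ω) := by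
  have h2π : 2 * π ≠ 0 := by positivity
  have hDFK θ : fderiv ℝ F (K θ) (deriv K θ) = deriv K (θ + ω) :=
    fderiv_apply_deriv_of_comp_eq_comp_add (hF.differentiable one_ne_zero _)
      (hK.differentiable one_ne_zero θ) hinv
  have hDKper : Periodic (deriv K) (2 * π) := fun θ => by
    rw [← deriv_comp_add_const, hKper.funext]
  have hbdd {v : ℝ → Fin 4 → ℝ} (hv : Continuous v) (hvT : Periodic v (2 * π)) :=
    isBounded_range_dotProduct_mulVec J4 h2π hv hK.continuous_deriv_one hvT hDKper
  have hlams : BddAbove (Set.range fun θ => |lams θ|) :=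
    ((hlamsper.comp abs).compact_of_continuous h2π (continuous_abs.comp hlamsc)).bddAbove
  have hs : (fun θ => vs θ ⬝ᵥ J4 *ᵥ deriv K θ) = 0 :=
    eq_zero_of_eq_mul_shift_of_abs_le hL (hbdd hvsc hvsper) (le_ciSup hlams)
      (dotProduct_mulVec_deriv_eq_mul_shift hsymp hDFK hvs)
  have hu : (fun θ => vu θ ⬝ᵥ J4 *ᵥ deriv K θ) = 0 :=
    eq_zero_of_eq_mul_shift_of_le_abs hLu (hbdd hvuc hvuper)
      (ciInf_le ⟨0, by rintro _ ⟨θ, rfl⟩; exact abs_nonneg _⟩)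
      (dotProduct_mulVec_deriv_eq_mul_shift hsymp hDFK hvu)
  have hB θ : B θ = 1 := by
    have h := hsymp (K θ) ((deriv K θ ⬝ᵥ deriv K θ)⁻¹ • (J4⁻¹ *ᵥ deriv K θ)) (deriv K θ)
    rw [hdecomp, hDFK, smul_J4_inv_mulVec_dotProduct_J4_mulVec (hDK θ), add_dotProduct,
      add_dotProduct, add_dotProduct, smul_dotProduct (B θ),
      smul_J4_inv_mulVec_dotProduct_J4_mulVec (hDK _)] at h
    simp only [smul_dotProduct, dotProduct_J4_mulVec_self, congrFun hs, congrFun hu,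
      Pi.zero_apply, smul_eq_mul] at h
    linarith
  intro θ
  rw [hvcdef, hvcdef, map_add, map_add, hdecomp, map_smul, map_smul, hvs, hvu, hB, hf₁, hf₂]
  module

/-- with `f₁, f₂` solving `C(θ) = f₁(θ+ω) − λs(θ)f₁(θ)` and
`D(θ) = f₂(θ+ω) − λu(θ)f₂(θ)`, the vector
`v_c(θ) = J⁻¹DK(θ)/‖DK(θ)‖² + f₁(θ)v_s(θ) + f₂(θ)v_u(θ)` is a symplectic-conjugate
center direction: `DF(K(θ)) v_c(θ) = A(θ) DK(θ+ω) + v_c(θ+ω)` (with `T = A`). -/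
theorem stmt8 (ω : ℝ)
    (F : (Fin 4 → ℝ) → (Fin 4 → ℝ)) (hF : ContDiff ℝ 1 F) (hFbij : Function.Bijective F)
    (hsymp : ∀ (x v₁ v₂ : Fin 4 → ℝ),
      (fderiv ℝ F x v₁) ⬝ᵥ J4.mulVec (fderiv ℝ F x v₂) = v₁ ⬝ᵥ J4.mulVec v₂)
    (K : ℝ → (Fin 4 → ℝ)) (hK : ContDiff ℝ 1 K)
    (hKper : Function.Periodic K (2 * Real.pi))
    (hinv : ∀ θ, F (K θ) = K (θ + ω))
    (hDK : ∀ θ, deriv K θ ≠ 0)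
    (vs : ℝ → (Fin 4 → ℝ)) (hvsc : Continuous vs)
    (hvsper : Function.Periodic vs (2 * Real.pi))
    (lams : ℝ → ℝ) (hlamsc : Continuous lams)
    (hlamsper : Function.Periodic lams (2 * Real.pi))
    (hvs : ∀ θ, fderiv ℝ F (K θ) (vs θ) = lams θ • vs (θ + ω))
    (hL : (⨆ θ : ℝ, |lams θ|) < 1)
    (vu : ℝ → (Fin 4 → ℝ)) (hvuc : Continuous vu)
    (hvuper : Function.Periodic vu (2 * Real.pi))
    (lamu : ℝ → ℝ) (hlamuc : Continuous lamu)
    (hlamuper : Function.Periodic lamu (2 * Real.pi))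
    (hvu : ∀ θ, fderiv ℝ F (K θ) (vu θ) = lamu θ • vu (θ + ω))
    (hLu : 1 < ⨅ θ : ℝ, |lamu θ|)
    (A B Cf Df : ℝ → ℝ)
    (hdecomp : ∀ θ,
      fderiv ℝ F (K θ) ((deriv K θ ⬝ᵥ deriv K θ)⁻¹ • (J4⁻¹.mulVec (deriv K θ)))
        = A θ • deriv K (θ + ω)
          + B θ • ((deriv K (θ + ω) ⬝ᵥ deriv K (θ + ω))⁻¹ • (J4⁻¹.mulVec (deriv K (θ + ω))))
          + Cf θ • vs (θ + ω) + Df θ • vu (θ + ω))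
    (f₁ f₂ : ℝ → ℝ)
    (hf₁ : ∀ θ, Cf θ = f₁ (θ + ω) - lams θ * f₁ θ)
    (hf₂ : ∀ θ, Df θ = f₂ (θ + ω) - lamu θ * f₂ θ)
    (vc : ℝ → (Fin 4 → ℝ))
    (hvcdef : ∀ θ, vc θ = (deriv K θ ⬝ᵥ deriv K θ)⁻¹ • (J4⁻¹.mulVec (deriv K θ))
      + f₁ θ • vs θ + f₂ θ • vu θ) :
    ∀ θ, fderiv ℝ F (K θ) (vc θ) = A θ • deriv K (θ + ω) + vc (θ + ω) :=
  stmt8_general ω F hF hsymp K hK hKper hinv hDK vs hvsc hvsper lams hlamsc hlamsper hvs hL vu hvuc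
    hvuper lamu hvu hLu A B Cf Df hdecomp f₁ f₂ hf₁ hf₂ vc hvcdef
end

section
/- Let F : ℝ⁴ → ℝ⁴ be smooth, K a C¹ invariant circle with F(K(θ)) = K(θ+ω), and suppose the 4×4 matrix-valued map P(θ) (invertible for all θ) and the constant matrix Λ = [[1,T,0,0],[0,1,0,0],[0,0,λs,0],[0,0,0,λu]] with T ≠ 0 satisfy DF(K(θ))P(θ) = P(θ+ω)Λ, with the second column of P denoted v_c(θ). Then for K_new(θ) := K(θ) + (Δω/T)v_c(θ), one has F(K_new(θ)) − K_new(θ+ω+Δω) = O(Δω²) as Δω → 0, uniformly in θ. -/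
open scoped Real
open Matrix

/-!
The centre-direction equation `DF(K θ) v_c(θ) = T K'(θ + ω) + v_c(θ + ω)` (the second column of
`DF(K) P = P(· + ω) Λ`) says that, to first order in `s`, `F` maps `K θ + s v_c(θ)` to
`K(θ + ω + T s) + s v_c(θ + ω + T s)`. Hence with `s = Δω / T` the defect consists only of the
second-order Taylor remainders of `F` and `K` and of `s` times the increment of `v_c` over a step
of length `Δω`, all `O(Δω²)`; the constants are uniform in `θ` by periodicity.
-/

open Function Metric Set

theorem Function.Periodic.exists_norm_le_of_continuous {E : Type*} [NormedAddCommGroup E]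
    {f : ℝ → E} {c : ℝ} (hp : Periodic f c) (hc : c ≠ 0) (hf : Continuous f) :
    ∃ C, ∀ x, ‖f x‖ ≤ C := by
  simpa using (hp.isBounded_of_continuous hc hf).exists_norm_le

section

variable {E G : Type*} [NormedAddCommGroup E] [NormedSpace ℝ E]
  [NormedAddCommGroup G] [NormedSpace ℝ G]

theorem periodic_fderiv {f : E → G} {c : E} (hf : Periodic f c) :
    Periodic (fderiv ℝ f) c := fun x => by
  rw [← fderiv_comp_add_right, show (fun y => f (y + c)) = f from funext hf]

theorem Convex.norm_image_sub_sub_fderiv_le {f : E → G} {s : Set E} {M : ℝ} {x y : E}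
    (hs : Convex ℝ s) (hf : ∀ z ∈ s, DifferentiableAt ℝ f z)
    (hf' : ∀ z ∈ s, DifferentiableAt ℝ (fderiv ℝ f) z)
    (hM : ∀ z ∈ s, ‖fderiv ℝ (fderiv ℝ f) z‖ ≤ M) (hx : x ∈ s) (hy : y ∈ s) :
    ‖f y - f x - fderiv ℝ f x (y - x)‖ ≤ M * ‖y - x‖ ^ 2 := by
  have hseg : segment ℝ x y ⊆ s := hs.segment_subset hx hy
  have hM0 : 0 ≤ M := (norm_nonneg (fderiv ℝ (fderiv ℝ f) x)).trans (hM x hx)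
  have hlip : ∀ z ∈ segment ℝ x y, ‖fderiv ℝ f z - fderiv ℝ f x‖ ≤ M * ‖y - x‖ := fun z hz =>
    (hs.norm_image_sub_le_of_norm_fderiv_le hf' hM hx (hseg hz)).trans
      (mul_le_mul_of_nonneg_left (norm_sub_le_of_mem_segment hz) hM0)
  calc ‖f y - f x - fderiv ℝ f x (y - x)‖ ≤ M * ‖y - x‖ * ‖y - x‖ :=
        (convex_segment x y).norm_image_sub_le_of_norm_fderiv_le' (fun z hz => hf z (hseg hz))
          hlip (left_mem_segment ℝ x y) (right_mem_segment ℝ x y)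
    _ = M * ‖y - x‖ ^ 2 := by ring

theorem ContDiff.exists_norm_image_add_sub_sub_fderiv_le [ProperSpace E] {f : E → G}
    (hf : ContDiff ℝ 2 f) {S : Set E} (hS : Bornology.IsBounded S) (r : ℝ) :
    ∃ C, 0 ≤ C ∧ ∀ x ∈ S, ∀ h : E, ‖h‖ ≤ r →
      ‖f (x + h) - f x - fderiv ℝ f x h‖ ≤ C * ‖h‖ ^ 2 := by
  obtain ⟨R, hR⟩ := hS.subset_closedBall 0
  have hf' : ContDiff ℝ 1 (fderiv ℝ f) := hf.fderiv_right le_rfl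
  obtain ⟨M, hM⟩ := (isCompact_closedBall (0 : E) (R + r)).exists_bound_of_continuousOn
    (hf'.continuous_fderiv one_ne_zero).continuousOn
  refine ⟨max M 0, le_max_right _ _, fun x hx h hh => ?_⟩
  have hxR : ‖x‖ ≤ R := mem_closedBall_zero_iff.mp (hR hx)
  have hx' : x ∈ closedBall (0 : E) (R + r) :=
    mem_closedBall_zero_iff.mpr (by linarith [norm_nonneg h])
  have hxh : x + h ∈ closedBall (0 : E) (R + r) :=
    mem_closedBall_zero_iff.mpr ((norm_add_le x h).trans (add_le_add hxR hh))
  simpa using (convex_closedBall (0 : E) (R + r)).norm_image_sub_sub_fderiv_le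
    (fun z _ => hf.differentiable two_ne_zero z) (fun z _ => hf'.differentiable one_ne_zero z)
    (fun z hz => (hM z hz).trans (le_max_left _ _)) hx' hxh

theorem Function.Periodic.exists_norm_image_add_sub_sub_fderiv_le {f : ℝ → E} {c : ℝ}
    (hp : Periodic f c) (hc : c ≠ 0) (hf : ContDiff ℝ 2 f) :
    ∃ C, ∀ t Δ : ℝ, ‖f (t + Δ) - f t - fderiv ℝ f t Δ‖ ≤ C * Δ ^ 2 := by
  have hf' : ContDiff ℝ 1 (fderiv ℝ f) := hf.fderiv_right le_rfl
  obtain ⟨M, hM⟩ := (periodic_fderiv (periodic_fderiv hp)).exists_norm_le_of_continuous hc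
    (hf'.continuous_fderiv one_ne_zero)
  refine ⟨M, fun t Δ => ?_⟩
  simpa [Real.norm_eq_abs, sq_abs] using convex_univ.norm_image_sub_sub_fderiv_le
    (fun z _ => hf.differentiable two_ne_zero z) (fun z _ => hf'.differentiable one_ne_zero z)
    (fun z _ => hM z) (mem_univ t) (mem_univ (t + Δ))

theorem Function.Periodic.exists_norm_image_add_sub_le {f : ℝ → E} {c : ℝ}
    (hp : Periodic f c) (hc : c ≠ 0) (hf : ContDiff ℝ 1 f) :
    ∃ L, ∀ t Δ : ℝ, ‖f (t + Δ) - f t‖ ≤ L * |Δ| := by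
  obtain ⟨L, hL⟩ :=
    (periodic_fderiv hp).exists_norm_le_of_continuous hc (hf.continuous_fderiv one_ne_zero)
  refine ⟨L, fun t Δ => ?_⟩
  simpa [Real.norm_eq_abs] using convex_univ.norm_image_sub_le_of_norm_fderiv_le
    (fun z _ => hf.differentiable one_ne_zero z) (fun z _ => hL z) (mem_univ t) (mem_univ (t + Δ))

theorem norm_invariance_defect_le {F : E → E} {K v : ℝ → E} {θ ω T s : ℝ}
    (hinv : F (K θ) = K (θ + ω))
    (hcentre : fderiv ℝ F (K θ) (v θ) = fderiv ℝ K (θ + ω) T + v (θ + ω)) :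
    ‖F (K θ + s • v θ) - (K (θ + ω + T * s) + s • v (θ + ω + T * s))‖ ≤
      ‖F (K θ + s • v θ) - F (K θ) - fderiv ℝ F (K θ) (s • v θ)‖
        + ‖K (θ + ω + T * s) - K (θ + ω) - fderiv ℝ K (θ + ω) (T * s)‖
        + |s| * ‖v (θ + ω + T * s) - v (θ + ω)‖ := by
  have hlin : fderiv ℝ F (K θ) (s • v θ) = fderiv ℝ K (θ + ω) (T * s) + s • v (θ + ω) := by
    rw [map_smul, hcentre, smul_add, mul_comm, ← smul_eq_mul, map_smul]
  have hsplit : F (K θ + s • v θ) - (K (θ + ω + T * s) + s • v (θ + ω + T * s)) =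
      (F (K θ + s • v θ) - F (K θ) - fderiv ℝ F (K θ) (s • v θ))
        - (K (θ + ω + T * s) - K (θ + ω) - fderiv ℝ K (θ + ω) (T * s))
        - s • (v (θ + ω + T * s) - v (θ + ω)) := by
    rw [hlin, hinv]
    module
  rw [hsplit, ← Real.norm_eq_abs, ← norm_smul]
  exact (norm_sub_le _ _).trans (add_le_add_left (norm_sub_le _ _) _)

theorem exists_norm_invariance_defect_le_mul_sq [ProperSpace E] {F : E → E} {K v : ℝ → E}
    {ω T c : ℝ} (hc : c ≠ 0) (hF : ContDiff ℝ 2 F) (hK : ContDiff ℝ 2 K) (hKper : Periodic K c)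
    (hv : ContDiff ℝ 1 v) (hvper : Periodic v c) (hinv : ∀ θ, F (K θ) = K (θ + ω))
    (hcentre : ∀ θ, fderiv ℝ F (K θ) (v θ) = fderiv ℝ K (θ + ω) T + v (θ + ω)) :
    ∃ C, ∀ s : ℝ, |s| ≤ 1 → ∀ θ,
      ‖F (K θ + s • v θ) - (K (θ + ω + T * s) + s • v (θ + ω + T * s))‖ ≤ C * s ^ 2 := by
  obtain ⟨Cv, hCv⟩ := hvper.exists_norm_le_of_continuous hc hv.continuous
  obtain ⟨CF, hCF0, hCF⟩ :=
    hF.exists_norm_image_add_sub_sub_fderiv_le (hKper.isBounded_of_continuous hc hK.continuous) Cv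
  obtain ⟨CK, hCK⟩ := hKper.exists_norm_image_add_sub_sub_fderiv_le hc hK
  obtain ⟨L, hL⟩ := hvper.exists_norm_image_add_sub_le hc hv
  refine ⟨CF * Cv ^ 2 + CK * T ^ 2 + L * |T|, fun s hs θ => ?_⟩
  have hCv0 : 0 ≤ Cv := (norm_nonneg _).trans (hCv 0)
  have hstep : ‖s • v θ‖ ≤ |s| * Cv := by
    rw [norm_smul, Real.norm_eq_abs]
    exact mul_le_mul_of_nonneg_left (hCv θ) (abs_nonneg s)
  have hFrem :
      ‖F (K θ + s • v θ) - F (K θ) - fderiv ℝ F (K θ) (s • v θ)‖ ≤ CF * Cv ^ 2 * s ^ 2 :=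
    calc _ ≤ CF * ‖s • v θ‖ ^ 2 :=
          hCF _ (mem_range_self θ) _ (hstep.trans (mul_le_of_le_one_left hCv0 hs))
      _ ≤ CF * (|s| * Cv) ^ 2 := by gcongr
      _ = CF * Cv ^ 2 * s ^ 2 := by rw [mul_pow, sq_abs]; ring
  calc _ ≤ _ := norm_invariance_defect_le (hinv θ) (hcentre θ)
    _ ≤ CF * Cv ^ 2 * s ^ 2 + CK * (T * s) ^ 2 + |s| * (L * |T * s|) := by
        gcongr
        exacts [hCK _ _, hL _ _]
    _ = (CF * Cv ^ 2 + CK * T ^ 2 + L * |T|) * s ^ 2 := by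
        rw [abs_mul]
        linear_combination (L * |T|) * abs_mul_abs_self s

end

theorem fderiv_apply_centre_eq {F : (Fin 4 → ℝ) → Fin 4 → ℝ} {K vc : ℝ → Fin 4 → ℝ}
    {P : ℝ → Matrix (Fin 4) (Fin 4) ℝ} {Λ : Matrix (Fin 4) (Fin 4) ℝ} {ω T lams lamu : ℝ}
    (hPcol1 : ∀ θ i, P θ i 0 = deriv K θ i)
    (hΛ : Λ = !![1, T, 0, 0; 0, 1, 0, 0; 0, 0, lams, 0; 0, 0, 0, lamu])
    (hPΛ : ∀ θ (v : Fin 4 → ℝ),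
      fderiv ℝ F (K θ) ((P θ).mulVec v) = (P (θ + ω)).mulVec (Λ.mulVec v))
    (hvcdef : ∀ θ i, vc θ i = P θ i 1) (θ : ℝ) :
    fderiv ℝ F (K θ) (vc θ) = fderiv ℝ K (θ + ω) T + vc (θ + ω) := by
  have hcol : (P θ).mulVec (Pi.single 1 1) = vc θ := by
    ext i
    simp [hvcdef]
  rw [← hcol, hPΛ, ← toSpanSingleton_deriv]
  ext i
  simp [hΛ, mulVec, dotProduct, Fin.sum_univ_four, hPcol1, hvcdef, mul_comm]

theorem stmt9_general (ω T lams lamu : ℝ) (hT : T ≠ 0)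
    (F : (Fin 4 → ℝ) → (Fin 4 → ℝ)) (hF : ContDiff ℝ 2 F)
    (K : ℝ → (Fin 4 → ℝ)) (hK : ContDiff ℝ 2 K)
    (hKper : Function.Periodic K (2 * Real.pi))
    (hinv : ∀ θ, F (K θ) = K (θ + ω))
    (P : ℝ → Matrix (Fin 4) (Fin 4) ℝ)
    (hPper : Function.Periodic P (2 * Real.pi))
    (hPcol1 : ∀ θ i, P θ i 0 = deriv K θ i)
    (Λ : Matrix (Fin 4) (Fin 4) ℝ)
    (hΛ : Λ = !![1, T, 0, 0; 0, 1, 0, 0; 0, 0, lams, 0; 0, 0, 0, lamu])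
    (hPΛ : ∀ θ (v : Fin 4 → ℝ),
      fderiv ℝ F (K θ) ((P θ).mulVec v) = (P (θ + ω)).mulVec (Λ.mulVec v))
    (vc : ℝ → (Fin 4 → ℝ)) (hvcdef : ∀ θ i, vc θ i = P θ i 1)
    (hvcC1 : ContDiff ℝ 1 vc) :
    ∃ Cb δ : ℝ, 0 < δ ∧ ∀ Δω : ℝ, |Δω| < δ → ∀ θ : ℝ,
      ‖F (K θ + (Δω / T) • vc θ) - (K (θ + ω + Δω) + (Δω / T) • vc (θ + ω + Δω))‖
        ≤ Cb * Δω ^ 2 := by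
  have hvc_per : Periodic vc (2 * π) := fun θ => funext fun i => by rw [hvcdef, hvcdef, hPper]
  obtain ⟨C, hC⟩ := exists_norm_invariance_defect_le_mul_sq Real.two_pi_pos.ne' hF hK hKper
    hvcC1 hvc_per hinv (fderiv_apply_centre_eq hPcol1 hΛ hPΛ hvcdef)
  refine ⟨C / T ^ 2, |T|, abs_pos.mpr hT, fun Δω hΔω θ => ?_⟩
  have hs : |Δω / T| ≤ 1 := by
    rw [abs_div, div_le_one (abs_pos.mpr hT)]
    exact hΔω.le
  calc _ ≤ C * (Δω / T) ^ 2 := by simpa only [mul_div_cancel₀ Δω hT] using hC (Δω / T) hs θ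
    _ = C / T ^ 2 * Δω ^ 2 := by ring

/-- continuation in the rotation number. If `K, P, Λ` solve the torus and
bundle equations with constant `Λ = [[1,T,0,0],[0,1,0,0],[0,0,λs,0],[0,0,0,λu]]`, `T ≠ 0`,
and `v_c` is the second column of `P`, then `K_new(θ) = K(θ) + (Δω/T) v_c(θ)` solves the
invariance equation for rotation number `ω + Δω` up to an error `O(Δω²)`, uniformly in
`θ`. -/
theorem stmt9 (ω T lams lamu : ℝ) (hT : T ≠ 0)
    (F : (Fin 4 → ℝ) → (Fin 4 → ℝ)) (hF : ContDiff ℝ 2 F)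
    (K : ℝ → (Fin 4 → ℝ)) (hK : ContDiff ℝ 2 K)
    (hKper : Function.Periodic K (2 * Real.pi))
    (hinv : ∀ θ, F (K θ) = K (θ + ω))
    (P : ℝ → Matrix (Fin 4) (Fin 4) ℝ) (hPc : Continuous P)
    (hPper : Function.Periodic P (2 * Real.pi))
    (hPinv : ∀ θ, IsUnit (P θ).det)
    (hPcol1 : ∀ θ i, P θ i 0 = deriv K θ i)
    (Λ : Matrix (Fin 4) (Fin 4) ℝ)
    (hΛ : Λ = !![1, T, 0, 0; 0, 1, 0, 0; 0, 0, lams, 0; 0, 0, 0, lamu])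
    (hPΛ : ∀ θ (v : Fin 4 → ℝ),
      fderiv ℝ F (K θ) ((P θ).mulVec v) = (P (θ + ω)).mulVec (Λ.mulVec v))
    (vc : ℝ → (Fin 4 → ℝ)) (hvcdef : ∀ θ i, vc θ i = P θ i 1)
    (hvcC1 : ContDiff ℝ 1 vc) :
    ∃ Cb δ : ℝ, 0 < δ ∧ ∀ Δω : ℝ, |Δω| < δ → ∀ θ : ℝ,
      ‖F (K θ + (Δω / T) • vc θ) - (K (θ + ω + Δω) + (Δω / T) • vc (θ + ω + Δω))‖
        ≤ Cb * Δω ^ 2 :=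
  stmt9_general ω T lams lamu hT F hF K hK hKper hinv P hPper hPcol1 Λ hΛ hPΛ vc hvcdef hvcC1
end

section
/- Let λ ∈ ℝ with |λ| < 1 (stable case), k ≥ 2 an integer, ω ∈ ℝ, and suppose P : 𝕋 → GL(4,ℝ) is continuous with continuous inverse and Λ is a constant invertible matrix of the form [[1,T,0,0],[0,1,0,0],[0,0,λs,0],[0,0,0,λu]] with λ = λs, |λs| < 1 < |λu|, satisfying DF(K(θ))P(θ) = P(θ+ω)Λ. Given continuous E_k : 𝕋 → ℝ⁴, the sequence W_{k,0} = 0, W_{k,i+1}(θ) = λ^k DF(K(θ))⁻¹ W_{k,i}(θ+ω) − DF(K(θ))⁻¹ E_k(θ) converges uniformly to a continuous W_k : 𝕋 → ℝ⁴ satisfying DF(K(θ)) W_k(θ) − λ^k W_k(θ+ω) = −E_k(θ). -/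
open scoped Real
open Matrix

/-!
Since `DF(K θ) P θ = P (θ + ω) Λ`, we have `DF(K θ)⁻¹ = P θ Λ⁻¹ P (θ + ω)⁻¹`, so in the frame `P`
the iteration has the constant matrix `B = λᵏ Λ⁻¹`: `W_{k,i}(θ)` is the `i`-th partial sum of
`∑ⱼ P θ Bʲ P (θ + jω)⁻¹ g (θ + jω)` with `g = -DF(K ·)⁻¹ E_k`. The entries of `Bʲ` are `λ^{kj}`,
`-jTλ^{kj}`, `(λᵏ/λs)ʲ` and `(λᵏ/λu)ʲ`, all absolutely summable because `k ≥ 2`. The functions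
`P`, `P⁻¹` and `g` are continuous and periodic, hence bounded, so the Weierstrass M-test gives
uniform convergence, and the recursion passes to the limit.
-/

theorem Continuous.matrix_inv_of_isUnit_det {X 𝕜 n : Type*} [TopologicalSpace X] [NormedField 𝕜]
    [Fintype n] [DecidableEq n] {P : X → Matrix n n 𝕜} (hP : Continuous P)
    (hdet : ∀ x, IsUnit (P x).det) : Continuous fun x => (P x)⁻¹ :=
  continuous_iff_continuousAt.2 fun x =>
    (continuousAt_matrix_inv _ <| by
      simpa [Ring.inverse_eq_inv'] using continuousAt_inv₀ (hdet x).ne_zero).comp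
      hP.continuousAt

theorem Matrix.conj_inv_mul_eq_one {n R : Type*} [Fintype n] [DecidableEq n] [CommRing R]
    {A P P' Λ : Matrix n n R} (hP : IsUnit P.det) (hP' : IsUnit P'.det) (hΛ : IsUnit Λ.det)
    (h : A * P = P' * Λ) : P * Λ⁻¹ * P'⁻¹ * A = 1 := by
  have hA : A = P' * Λ * P⁻¹ := by
    rw [← h, Matrix.mul_assoc, mul_nonsing_inv _ hP, Matrix.mul_one]
  rw [hA]
  simp only [Matrix.mul_assoc]
  rw [← Matrix.mul_assoc P'⁻¹, nonsing_inv_mul _ hP', Matrix.one_mul, ← Matrix.mul_assoc Λ⁻¹,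
    nonsing_inv_mul _ hΛ, Matrix.one_mul, mul_nonsing_inv _ hP]

theorem eq_of_tendsto_of_recursion {α E : Type*} [TopologicalSpace E] [T2Space E]
    {W : ℕ → α → E} {V : α → E} {Φ : α → E → E} {τ : α → α}
    (hV : ∀ x, Filter.Tendsto (fun i => W i x) Filter.atTop (nhds (V x)))
    (hΦ : ∀ x, Continuous (Φ x)) (hW : ∀ i x, W (i + 1) x = Φ x (W i (τ x))) (x : α) :
    V x = Φ x (V (τ x)) :=
  tendsto_nhds_unique ((hV x).comp (Filter.tendsto_add_atTop_nat 1)) <| by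
    simpa only [Function.comp_def, hW] using ((hΦ x).tendsto _).comp (hV (τ x))

theorem abs_pow_mul_inv_lt_one {s : ℝ} {k : ℕ} (hk : 2 ≤ k) (hs : |s| < 1) (hs0 : s ≠ 0) :
    |s ^ k * s⁻¹| < 1 := by
  rw [← pow_one s⁻¹, inv_pow, ← pow_sub₀ s hs0 (by omega), abs_pow]
  exact pow_lt_one₀ (abs_nonneg s) hs (by omega)

def shearDiag (T a b : ℝ) : Matrix (Fin 4) (Fin 4) ℝ :=
  !![1, T, 0, 0; 0, 1, 0, 0; 0, 0, a, 0; 0, 0, 0, b]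

theorem shearDiag_mul (T a b T' a' b' : ℝ) :
    shearDiag T a b * shearDiag T' a' b' = shearDiag (T + T') (a * a') (b * b') := by
  ext i j
  fin_cases i <;> fin_cases j <;> simp [shearDiag, Matrix.mul_apply, Fin.sum_univ_four, add_comm]

theorem shearDiag_zero_one_one : shearDiag 0 1 1 = 1 := by
  ext i j
  fin_cases i <;> fin_cases j <;> simp [shearDiag]

theorem shearDiag_pow (T a b : ℝ) (m : ℕ) :
    shearDiag T a b ^ m = shearDiag (m * T) (a ^ m) (b ^ m) := by
  induction m with
  | zero => simp [shearDiag_zero_one_one]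
  | succ m ih => rw [pow_succ, ih, shearDiag_mul]; push_cast; ring_nf

theorem shearDiag_mul_shearDiag_inv {a b : ℝ} (ha : a ≠ 0) (hb : b ≠ 0) (T : ℝ) :
    shearDiag T a b * shearDiag (-T) a⁻¹ b⁻¹ = 1 := by
  rw [shearDiag_mul, add_neg_cancel, mul_inv_cancel₀ ha, mul_inv_cancel₀ hb,
    shearDiag_zero_one_one]

theorem inv_shearDiag {a b : ℝ} (ha : a ≠ 0) (hb : b ≠ 0) (T : ℝ) :
    (shearDiag T a b)⁻¹ = shearDiag (-T) a⁻¹ b⁻¹ :=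
  inv_eq_right_inv (shearDiag_mul_shearDiag_inv ha hb T)

section LinftyOpNorm

attribute [local instance] Matrix.linftyOpNormedAddCommGroup

theorem Matrix.linfty_opNorm_le_sum_norm {m n α : Type*} [Fintype m] [Fintype n]
    [NormedAddCommGroup α] (A : Matrix m n α) : ‖A‖ ≤ ∑ i, ∑ j, ‖A i j‖ := by
  have hsup : (Finset.univ.sup fun i => ∑ j, ‖A i j‖₊) ≤ ∑ i, ∑ j, ‖A i j‖₊ :=
    Finset.sup_le fun i _ =>
      Finset.single_le_sum (f := fun i => ∑ j, ‖A i j‖₊) (fun _ _ => zero_le) (Finset.mem_univ i)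
  calc ‖A‖ ≤ ((∑ i, ∑ j, ‖A i j‖₊ : NNReal) : ℝ) := by
        rw [linfty_opNorm_def]; exact NNReal.coe_le_coe.mpr hsup
    _ = ∑ i, ∑ j, ‖A i j‖ := by push_cast; rfl

theorem summable_norm_pow_smul_shearDiag {c T a b : ℝ} (hc : |c| < 1) (ha : |c * a| < 1)
    (hb : |c * b| < 1) : Summable fun j : ℕ => ‖(c • shearDiag T a b) ^ j‖ := by
  refine .of_nonneg_of_le (fun _ => norm_nonneg _) (fun j => linfty_opNorm_le_sum_norm _) ?_
  refine summable_sum fun i _ => summable_sum fun l _ => ?_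
  simp only [smul_pow, shearDiag_pow, Matrix.smul_apply]
  have hgeom {r : ℝ} (hr : |r| < 1) : Summable fun j : ℕ => |r| ^ j :=
    summable_geometric_of_lt_one (abs_nonneg r) hr
  fin_cases i <;> fin_cases l <;> simp [shearDiag]
  · exact hc
  · simpa [mul_comm, mul_left_comm] using
      (summable_pow_mul_geometric_of_norm_lt_one 1 (r := |c|) (by simpa using hc)).mul_right |T|
  · exact hc
  · simpa [← mul_pow, ← abs_mul] using hgeom ha
  · simpa [← mul_pow, ← abs_mul] using hgeom hb

end LinftyOpNorm

section FrameIteration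

variable {n : Type*} [Fintype n] [DecidableEq n]

noncomputable def frameTerm (P : ℝ → Matrix n n ℝ) (B : Matrix n n ℝ) (ω : ℝ) (g : ℝ → n → ℝ)
    (j : ℕ) (θ : ℝ) : n → ℝ :=
  P θ *ᵥ (B ^ j *ᵥ ((P (θ + j * ω))⁻¹ *ᵥ g (θ + j * ω)))

theorem iterate_eq_sum_frameTerm {A P : ℝ → Matrix n n ℝ} {C : Matrix n n ℝ} {c ω : ℝ}
    {g : ℝ → n → ℝ} {W : ℕ → ℝ → n → ℝ} (hP : ∀ θ, IsUnit (P θ).det)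
    (hA : ∀ θ, A θ = P θ * C * (P (θ + ω))⁻¹) (hW0 : ∀ θ, W 0 θ = 0)
    (hW : ∀ i θ, W (i + 1) θ = c • (A θ *ᵥ W i (θ + ω)) + g θ) (i : ℕ) (θ : ℝ) :
    W i θ = ∑ j ∈ Finset.range i, frameTerm P (c • C) ω g j θ := by
  induction i generalizing θ with
  | zero => simp [hW0]
  | succ i ih =>
    have hstep (j : ℕ) : c • (A θ *ᵥ frameTerm P (c • C) ω g j (θ + ω))
        = frameTerm P (c • C) ω g (j + 1) θ := by
      have harg : θ + ω + j * ω = θ + (j + 1 : ℕ) * ω := by push_cast; ring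
      simp only [frameTerm, hA, harg, mulVec_mulVec, ← smul_mulVec, pow_succ']
      congr 1
      simp only [Matrix.mul_assoc, ← Matrix.mul_assoc _ (P (θ + ω)), nonsing_inv_mul _ (hP _),
        Matrix.one_mul, Matrix.mul_smul, Matrix.smul_mul]
    have hzero : g θ = frameTerm P (c • C) ω g 0 θ := by
      simp [frameTerm, mulVec_mulVec, mul_nonsing_inv _ (hP θ)]
    rw [hW, ih, Finset.sum_range_succ', mulVec_sum, Finset.smul_sum, hzero]
    simp only [hstep]

theorem continuous_frameTerm {P : ℝ → Matrix n n ℝ} (hPc : Continuous P)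
    (hPdet : ∀ θ, IsUnit (P θ).det) {g : ℝ → n → ℝ} (hg : Continuous g) (B : Matrix n n ℝ)
    (ω : ℝ) (j : ℕ) : Continuous (frameTerm P B ω g j) := by
  have hshift : Continuous fun θ : ℝ => θ + j * ω := continuous_add_const _
  exact hPc.matrix_mulVec <| continuous_const.matrix_mulVec <|
    ((hPc.matrix_inv_of_isUnit_det hPdet).comp hshift).matrix_mulVec (hg.comp hshift)

section LinftyOpNorm

attribute [local instance] Matrix.linftyOpNormedAddCommGroup

theorem norm_frameTerm_le {P : ℝ → Matrix n n ℝ} {g : ℝ → n → ℝ} {CP CQ Cg : ℝ}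
    (hP : ∀ θ, ‖P θ‖ ≤ CP) (hQ : ∀ θ, ‖(P θ)⁻¹‖ ≤ CQ) (hg : ∀ θ, ‖g θ‖ ≤ Cg)
    (B : Matrix n n ℝ) (ω : ℝ) (j : ℕ) (θ : ℝ) :
    ‖frameTerm P B ω g j θ‖ ≤ CP * ‖B ^ j‖ * CQ * Cg := by
  set θ' := θ + j * ω
  calc ‖frameTerm P B ω g j θ‖ ≤ ‖P θ‖ * (‖B ^ j‖ * (‖(P θ')⁻¹‖ * ‖g θ'‖)) := by
        refine (linfty_opNorm_mulVec _ _).trans ?_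
        gcongr
        refine (linfty_opNorm_mulVec _ _).trans ?_
        gcongr
        exact linfty_opNorm_mulVec _ _
    _ ≤ CP * (‖B ^ j‖ * (CQ * Cg)) := by
        have := (norm_nonneg _).trans (hQ θ)
        gcongr
        exacts [(norm_nonneg _).trans (hP θ), hP θ, hQ θ', hg θ']
    _ = CP * ‖B ^ j‖ * CQ * Cg := by ring

theorem exists_tendstoUniformly_of_frame_iteration {A P : ℝ → Matrix n n ℝ} {C : Matrix n n ℝ}
    {c ω L : ℝ} {g : ℝ → n → ℝ} {W : ℕ → ℝ → n → ℝ} (hL : L ≠ 0) (hPc : Continuous P)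
    (hPper : Function.Periodic P L) (hPdet : ∀ θ, IsUnit (P θ).det)
    (hA : ∀ θ, A θ = P θ * C * (P (θ + ω))⁻¹) (hB : Summable fun j => ‖(c • C) ^ j‖)
    (hgc : Continuous g) (hgper : Function.Periodic g L) (hW0 : ∀ θ, W 0 θ = 0)
    (hW : ∀ i θ, W (i + 1) θ = c • (A θ *ᵥ W i (θ + ω)) + g θ) :
    ∃ V : ℝ → n → ℝ, Continuous V ∧ TendstoUniformly W V Filter.atTop ∧
      ∀ θ, V θ = c • (A θ *ᵥ V (θ + ω)) + g θ := by
  obtain ⟨CP, hCP⟩ := (hPper.isBounded_of_continuous hL hPc).exists_norm_le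
  obtain ⟨CQ, hCQ⟩ := ((hPper.comp (·⁻¹)).isBounded_of_continuous hL
    (hPc.matrix_inv_of_isUnit_det hPdet)).exists_norm_le
  obtain ⟨Cg, hCg⟩ := (hgper.isBounded_of_continuous hL hgc).exists_norm_le
  have hsum : W = fun i θ => ∑ j ∈ Finset.range i, frameTerm P (c • C) ω g j θ :=
    funext₂ (iterate_eq_sum_frameTerm hPdet hA hW0 hW)
  have hunif : TendstoUniformly W (fun θ => ∑' j, frameTerm P (c • C) ω g j θ) Filter.atTop := by
    rw [hsum]
    exact tendstoUniformly_tsum_nat ((hB.mul_left CP).mul_right CQ |>.mul_right Cg)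
      (norm_frameTerm_le (fun θ => hCP _ ⟨θ, rfl⟩) (fun θ => hCQ _ ⟨θ, rfl⟩)
        (fun θ => hCg _ ⟨θ, rfl⟩) _ ω)
  refine ⟨_, hunif.continuous (.of_forall fun i => ?_), hunif,
    eq_of_tendsto_of_recursion (Φ := fun θ v => c • (A θ *ᵥ v) + g θ) (τ := (· + ω))
      hunif.tendsto_at (fun θ => ?_) hW⟩
  · rw [hsum]
    exact continuous_finsetSum _ fun j _ => continuous_frameTerm hPc hPdet hgc _ ω j
  · exact ((continuous_const.matrix_mulVec continuous_id).const_smul c).add continuous_const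

end LinftyOpNorm

end FrameIteration

theorem stmt10_general (ω T lams lamu lam : ℝ) (k : ℕ) (hk : 2 ≤ k)
    (hlam : lam = lams) (hls : |lams| < 1) (hls0 : lams ≠ 0) (hlu : 1 < |lamu|)
    (DFm : ℝ → Matrix (Fin 4) (Fin 4) ℝ)
    (P : ℝ → Matrix (Fin 4) (Fin 4) ℝ) (hPc : Continuous P)
    (hPper : Function.Periodic P (2 * Real.pi))
    (hPinv : ∀ θ, IsUnit (P θ).det)
    (Λ : Matrix (Fin 4) (Fin 4) ℝ)
    (hΛ : Λ = !![1, T, 0, 0; 0, 1, 0, 0; 0, 0, lams, 0; 0, 0, 0, lamu])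
    (hPΛ : ∀ θ, DFm θ * P θ = P (θ + ω) * Λ)
    (Ek : ℝ → (Fin 4 → ℝ)) (hEkc : Continuous Ek)
    (hEkper : Function.Periodic Ek (2 * Real.pi))
    (W : ℕ → ℝ → (Fin 4 → ℝ)) (hW0 : ∀ θ, W 0 θ = 0)
    (hWrec : ∀ i θ, W (i + 1) θ
      = lam ^ k • (DFm θ)⁻¹.mulVec (W i (θ + ω)) - (DFm θ)⁻¹.mulVec (Ek θ)) :
    ∃ Wk : ℝ → (Fin 4 → ℝ), Continuous Wk ∧
      TendstoUniformly (fun i θ => W i θ) Wk Filter.atTop ∧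
      ∀ θ, (DFm θ).mulVec (Wk θ) - lam ^ k • Wk (θ + ω) = -(Ek θ) := by
  subst hlam
  have hlu0 : lamu ≠ 0 := by rintro rfl; norm_num at hlu
  have hΛdet : IsUnit Λ.det := by
    rw [hΛ]; exact isUnit_det_of_right_inverse (shearDiag_mul_shearDiag_inv hls0 hlu0 T)
  have hleft (θ : ℝ) : P θ * Λ⁻¹ * (P (θ + ω))⁻¹ * DFm θ = 1 :=
    conj_inv_mul_eq_one (hPinv θ) (hPinv (θ + ω)) hΛdet (hPΛ θ)
  have hDFinv (θ : ℝ) := inv_eq_left_inv (hleft θ)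
  have hc : |lam ^ k| < 1 := by
    rw [abs_pow]; exact pow_lt_one₀ (abs_nonneg _) hls (by omega)
  have hcu : |lam ^ k * lamu⁻¹| < 1 := by
    rw [abs_mul, abs_inv, mul_inv_lt_iff₀ (by positivity), one_mul]
    exact hc.trans hlu
  have hcs : |lam ^ k * lam⁻¹| < 1 := abs_pow_mul_inv_lt_one hk hls hls0
  have hΛinv : Λ⁻¹ = shearDiag (-T) lam⁻¹ lamu⁻¹ := hΛ ▸ inv_shearDiag hls0 hlu0 T
  -- The matrix norm is a local instance above, so this bound is transported rather than stated.
  have hB := hΛinv ▸ summable_norm_pow_smul_shearDiag (T := -T) hc hcs hcu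
  have hgc : Continuous fun θ => -((DFm θ)⁻¹ *ᵥ Ek θ) := by
    simp only [hDFinv]
    exact (((hPc.matrix_mul continuous_const).matrix_mul
      ((hPc.matrix_inv_of_isUnit_det hPinv).comp (continuous_add_const ω))).matrix_mulVec
        hEkc).neg
  have hgper : Function.Periodic (fun θ => -((DFm θ)⁻¹ *ᵥ Ek θ)) (2 * π) := fun θ => by
    simp only [hDFinv, add_right_comm θ (2 * π) ω, hPper _, hEkper _]
  obtain ⟨V, hVc, hWV, hV⟩ := exists_tendstoUniformly_of_frame_iteration Real.two_pi_pos.ne'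
    hPc hPper hPinv hDFinv hB hgc hgper hW0 fun i θ => (hWrec i θ).trans (sub_eq_add_neg _ _)
  refine ⟨V, hVc, hWV, fun θ => ?_⟩
  have hDF : DFm θ * (DFm θ)⁻¹ = 1 := mul_nonsing_inv _ (isUnit_det_of_left_inverse (hleft θ))
  rw [hV θ, mulVec_add, mulVec_smul, mulVec_neg, mulVec_mulVec, mulVec_mulVec, hDF,
    one_mulVec, one_mulVec, add_sub_cancel_left]

/-- stable case `|λ| < 1`, `λ = λs`: the fixed-point iteration
`W_{k,0} = 0`, `W_{k,i+1}(θ) = λ^k DF(K(θ))⁻¹ W_{k,i}(θ+ω) − DF(K(θ))⁻¹ E_k(θ)`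
converges uniformly to a continuous `W_k` solving
`DF(K(θ)) W_k(θ) − λ^k W_k(θ+ω) = −E_k(θ)`. -/
theorem stmt10 (ω T lams lamu lam : ℝ) (k : ℕ) (hk : 2 ≤ k)
    (hlam : lam = lams) (hls : |lams| < 1) (hls0 : lams ≠ 0) (hlu : 1 < |lamu|)
    (F : (Fin 4 → ℝ) → (Fin 4 → ℝ)) (hF : ContDiff ℝ 1 F)
    (K : ℝ → (Fin 4 → ℝ)) (hKc : Continuous K)
    (hKper : Function.Periodic K (2 * Real.pi))
    (hinv : ∀ θ, F (K θ) = K (θ + ω))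
    (DFm : ℝ → Matrix (Fin 4) (Fin 4) ℝ)
    (hDFm : ∀ θ (v : Fin 4 → ℝ), fderiv ℝ F (K θ) v = (DFm θ).mulVec v)
    (P : ℝ → Matrix (Fin 4) (Fin 4) ℝ) (hPc : Continuous P)
    (hPper : Function.Periodic P (2 * Real.pi))
    (hPinv : ∀ θ, IsUnit (P θ).det)
    (Λ : Matrix (Fin 4) (Fin 4) ℝ)
    (hΛ : Λ = !![1, T, 0, 0; 0, 1, 0, 0; 0, 0, lams, 0; 0, 0, 0, lamu])
    (hPΛ : ∀ θ, DFm θ * P θ = P (θ + ω) * Λ)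
    (Ek : ℝ → (Fin 4 → ℝ)) (hEkc : Continuous Ek)
    (hEkper : Function.Periodic Ek (2 * Real.pi))
    (W : ℕ → ℝ → (Fin 4 → ℝ)) (hW0 : ∀ θ, W 0 θ = 0)
    (hWrec : ∀ i θ, W (i + 1) θ
      = lam ^ k • (DFm θ)⁻¹.mulVec (W i (θ + ω)) - (DFm θ)⁻¹.mulVec (Ek θ)) :
    ∃ Wk : ℝ → (Fin 4 → ℝ), Continuous Wk ∧
      TendstoUniformly (fun i θ => W i θ) Wk Filter.atTop ∧
      ∀ θ, (DFm θ).mulVec (Wk θ) - lam ^ k • Wk (θ + ω) = -(Ek θ) :=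
  stmt10_general ω T lams lamu lam k hk hlam hls hls0 hlu DFm P hPc hPper hPinv Λ hΛ hPΛ Ek hEkc
    hEkper W hW0 hWrec
end

section
/- Let F, K, P, Λ, E_red be as above and suppose Q : 𝕋 → ℝ^{4×4} and ΔΛ : 𝕋 → ℝ^{4×4} solve −E_red(θ) = Λ(θ)Q(θ) − Q(θ+ω)Λ(θ) − ΔΛ(θ), and suppose I + Q(θ) is invertible for all θ. Then the new reducibility error E_red,new(θ) := [P(θ+ω)(I+Q(θ+ω))]⁻¹ DF(K(θ)) P(θ)(I+Q(θ)) − (Λ(θ)+ΔΛ(θ)) satisfies E_red,new(θ) = (I+Q(θ+ω))⁻¹ [E_red(θ)Q(θ) − Q(θ+ω)ΔΛ(θ)]. In particular sup‖E_red,new‖ ≤ sup‖(I+Q)⁻¹‖ · (sup‖E_red‖·sup‖Q‖ + sup‖Q‖·sup‖ΔΛ‖). -/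
/-!
Writing `DF(K(θ)) P(θ) = P(θ+ω) (Λ(θ) + E_red(θ))`, the cohomological equation for `Q, ΔΛ`
turns `(Λ + E_red)(I + Q)` into `(I + Q(θ+ω))(Λ + ΔΛ) + (E_red Q − Q(θ+ω) ΔΛ)`, so conjugating
by `I + Q` leaves only the quadratic remainder; no Taylor expansion is involved. The bound on
the suprema then follows from submultiplicativity of the operator norm, which is the `ℓ∞`
operator norm of matrices, and from the boundedness of continuous periodic functions.
-/

open scoped Real
open Matrix

/-- The operator norm of a `4×4` real matrix acting on `Fin 4 → ℝ` by `mulVec`. -/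
noncomputable def opNorm (M : Matrix (Fin 4) (Fin 4) ℝ) : ℝ :=
  ‖(LinearMap.toContinuousLinearMap (Matrix.mulVecLin M) :
      (Fin 4 → ℝ) →L[ℝ] (Fin 4 → ℝ))‖

theorem Continuous.matrix_inv {X R n : Type*} [TopologicalSpace X] [NormedCommRing R]
    [HasSummableGeomSeries R] [Fintype n] [DecidableEq n] {f : X → Matrix n n R}
    (hf : Continuous f) (h : ∀ x, IsUnit (f x).det) : Continuous fun x => (f x)⁻¹ :=
  continuous_iff_continuousAt.2 fun x =>
    (continuousAt_matrix_inv _ (NormedRing.inverse_continuousAt (h x).unit)).comp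
      hf.continuousAt

theorem Function.Periodic.bddAbove_range_norm {E : Type*} [SeminormedAddGroup E] {f : ℝ → E}
    {c : ℝ} (hp : Function.Periodic f c) (hc : c ≠ 0) (hf : Continuous f) :
    BddAbove (Set.range fun x => ‖f x‖) :=
  ((hp.comp norm).isBounded_of_continuous hc hf.norm).bddAbove

theorem reducibility_error_newton_step {n α : Type*} [Fintype n] [DecidableEq n] [CommRing α]
    {P P' D Λ E Q Q' ΔΛ : Matrix n n α}
    (hQ' : IsUnit (1 + Q')) (hE : E = P'⁻¹ * D * P - Λ)
    (hcoh : -E = Λ * Q - Q' * Λ - ΔΛ) :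
    (P' * (1 + Q'))⁻¹ * D * (P * (1 + Q)) - (Λ + ΔΛ) = (1 + Q')⁻¹ * (E * Q - Q' * ΔΛ) := by
  have hD : P'⁻¹ * D * P = E + Λ := by rw [hE, sub_add_cancel]
  have hsplit : (E + Λ) * (1 + Q) = (E * Q - Q' * ΔΛ) + (1 + Q') * (Λ + ΔΛ) := by
    rw [neg_eq_iff_eq_neg.mp hcoh]
    noncomm_ring
  calc (P' * (1 + Q'))⁻¹ * D * (P * (1 + Q)) - (Λ + ΔΛ)
      = (1 + Q')⁻¹ * ((P'⁻¹ * D * P) * (1 + Q)) - (Λ + ΔΛ) := by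
        simp only [Matrix.mul_inv_rev, Matrix.mul_assoc]
    _ = (1 + Q')⁻¹ * (E * Q - Q' * ΔΛ) + (1 + Q')⁻¹ * (1 + Q') * (Λ + ΔΛ) - (Λ + ΔΛ) := by
        rw [hD, hsplit, Matrix.mul_add, Matrix.mul_assoc]
    _ = (1 + Q')⁻¹ * (E * Q - Q' * ΔΛ) := by
        rw [nonsing_inv_mul _ ((isUnit_iff_isUnit_det _).mp hQ'), Matrix.one_mul,
          add_sub_cancel_right]

theorem ciSup_norm_mul_sub_mul_le {ι R : Type*} [Nonempty ι] [SeminormedRing R] (s : ι → ι)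
    {a e q d : ι → R} (ha : BddAbove (Set.range fun i => ‖a i‖))
    (he : BddAbove (Set.range fun i => ‖e i‖)) (hq : BddAbove (Set.range fun i => ‖q i‖))
    (hd : BddAbove (Set.range fun i => ‖d i‖)) :
    ⨆ i, ‖a (s i) * (e i * q i - q (s i) * d i)‖
      ≤ (⨆ i, ‖a i‖) * ((⨆ i, ‖e i‖) * (⨆ i, ‖q i‖) + (⨆ i, ‖q i‖) * (⨆ i, ‖d i‖)) := by
  have hsup_nonneg : ∀ f : ι → R, 0 ≤ ⨆ i, ‖f i‖ := fun f =>
    Real.iSup_nonneg fun i => norm_nonneg _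
  have ha' := le_ciSup ha
  have he' := le_ciSup he
  have hq' := le_ciSup hq
  have hd' := le_ciSup hd
  refine ciSup_le fun i => ?_
  calc ‖a (s i) * (e i * q i - q (s i) * d i)‖
      ≤ ‖a (s i)‖ * (‖e i‖ * ‖q i‖ + ‖q (s i)‖ * ‖d i‖) := by
        refine (norm_mul_le _ _).trans (mul_le_mul_of_nonneg_left ?_ (norm_nonneg _))
        exact (norm_sub_le _ _).trans (add_le_add (norm_mul_le _ _) (norm_mul_le _ _))
    _ ≤ _ := by
        gcongr <;> first | exact hsup_nonneg _ | apply_assumption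

section
attribute [local instance] Matrix.linftyOpNormedRing

theorem opNorm_eq_norm (M : Matrix (Fin 4) (Fin 4) ℝ) : opNorm M = ‖M‖ :=
  (linfty_opNorm_eq_opNorm M).symm

end

theorem stmt14_general (ω : ℝ)
    (DFm : ℝ → Matrix (Fin 4) (Fin 4) ℝ)
    (P : ℝ → Matrix (Fin 4) (Fin 4) ℝ)
    (Λ : ℝ → Matrix (Fin 4) (Fin 4) ℝ) (hΛc : Continuous Λ)
    (hΛper : Function.Periodic Λ (2 * Real.pi))
    (Ered : ℝ → Matrix (Fin 4) (Fin 4) ℝ)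
    (hEred : ∀ θ, Ered θ = (P (θ + ω))⁻¹ * DFm θ * P θ - Λ θ)
    (Q ΔΛ : ℝ → Matrix (Fin 4) (Fin 4) ℝ)
    (hQc : Continuous Q) (hQper : Function.Periodic Q (2 * Real.pi))
    (hΔΛc : Continuous ΔΛ) (hΔΛper : Function.Periodic ΔΛ (2 * Real.pi))
    (hQeq : ∀ θ, -Ered θ = Λ θ * Q θ - Q (θ + ω) * Λ θ - ΔΛ θ)
    (hQinv : ∀ θ, IsUnit (1 + Q θ))
    (Erednew : ℝ → Matrix (Fin 4) (Fin 4) ℝ)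
    (hErednew : ∀ θ, Erednew θ
      = (P (θ + ω) * (1 + Q (θ + ω)))⁻¹ * DFm θ * (P θ * (1 + Q θ)) - (Λ θ + ΔΛ θ)) :
    (∀ θ, Erednew θ = (1 + Q (θ + ω))⁻¹ * (Ered θ * Q θ - Q (θ + ω) * ΔΛ θ)) ∧
    (⨆ θ : ℝ, opNorm (Erednew θ))
      ≤ (⨆ θ : ℝ, opNorm ((1 + Q θ)⁻¹))
        * ((⨆ θ : ℝ, opNorm (Ered θ)) * (⨆ θ : ℝ, opNorm (Q θ))
          + (⨆ θ : ℝ, opNorm (Q θ)) * (⨆ θ : ℝ, opNorm (ΔΛ θ))) := by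
  have hnew : ∀ θ, Erednew θ = (1 + Q (θ + ω))⁻¹ * (Ered θ * Q θ - Q (θ + ω) * ΔΛ θ) :=
    fun θ => (hErednew θ).trans
      (reducibility_error_newton_step (hQinv (θ + ω)) (hEred θ) (hQeq θ))
  refine ⟨hnew, ?_⟩
  let _ : NormedRing (Matrix (Fin 4) (Fin 4) ℝ) := Matrix.linftyOpNormedRing
  -- `Ered` is bounded because the cohomological equation expresses it through `Λ, Q, ΔΛ`.
  have hEred_eq : Ered = (fun θ => Q (θ + ω)) * Λ + ΔΛ - Λ * Q := funext fun θ => by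
    simp only [Pi.sub_apply, Pi.add_apply, Pi.mul_apply]
    rw [neg_eq_iff_eq_neg.mp (hQeq θ)]
    abel
  have hEred_per : Function.Periodic Ered (2 * π) := by
    rw [hEred_eq]
    exact (((hQper.add_const ω).mul hΛper).add hΔΛper).sub (hΛper.mul hQper)
  have hEred_c : Continuous Ered := by rw [hEred_eq]; fun_prop
  have hinv_per : Function.Periodic (fun θ => (1 + Q θ)⁻¹) (2 * π) :=
    fun θ => by simp only [hQper θ]
  have hinv_c : Continuous fun θ => (1 + Q θ)⁻¹ :=
    (continuous_const.add hQc).matrix_inv fun θ => (isUnit_iff_isUnit_det _).mp (hQinv θ)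
  have h2π : 2 * π ≠ 0 := Real.two_pi_pos.ne'
  simp only [opNorm_eq_norm, hnew]
  exact ciSup_norm_mul_sub_mul_le (· + ω) (hinv_per.bddAbove_range_norm h2π hinv_c)
    (hEred_per.bddAbove_range_norm h2π hEred_c) (hQper.bddAbove_range_norm h2π hQc)
    (hΔΛper.bddAbove_range_norm h2π hΔΛc)

/-- quadratic reduction of the reducibility error. If `Q, ΔΛ` solve
`−E_red(θ) = Λ(θ)Q(θ) − Q(θ+ω)Λ(θ) − ΔΛ(θ)` and `I + Q(θ)` is invertible, then
`E_red,new(θ) = (I+Q(θ+ω))⁻¹ [E_red(θ)Q(θ) − Q(θ+ω)ΔΛ(θ)]`, and in particular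
`sup‖E_red,new‖ ≤ sup‖(I+Q)⁻¹‖ (sup‖E_red‖ sup‖Q‖ + sup‖Q‖ sup‖ΔΛ‖)`. -/
theorem stmt14 (ω : ℝ)
    (F : (Fin 4 → ℝ) → (Fin 4 → ℝ)) (hF : ContDiff ℝ 1 F)
    (K : ℝ → (Fin 4 → ℝ)) (hKc : Continuous K)
    (hKper : Function.Periodic K (2 * Real.pi))
    (DFm : ℝ → Matrix (Fin 4) (Fin 4) ℝ)
    (hDFm : ∀ θ (v : Fin 4 → ℝ), fderiv ℝ F (K θ) v = (DFm θ).mulVec v)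
    (hDFmc : Continuous DFm) (hDFmper : Function.Periodic DFm (2 * Real.pi))
    (P : ℝ → Matrix (Fin 4) (Fin 4) ℝ) (hPc : Continuous P)
    (hPper : Function.Periodic P (2 * Real.pi))
    (hPinv : ∀ θ, IsUnit (P θ).det)
    (Λ : ℝ → Matrix (Fin 4) (Fin 4) ℝ) (hΛc : Continuous Λ)
    (hΛper : Function.Periodic Λ (2 * Real.pi))
    (Ered : ℝ → Matrix (Fin 4) (Fin 4) ℝ)
    (hEred : ∀ θ, Ered θ = (P (θ + ω))⁻¹ * DFm θ * P θ - Λ θ)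
    (Q ΔΛ : ℝ → Matrix (Fin 4) (Fin 4) ℝ)
    (hQc : Continuous Q) (hQper : Function.Periodic Q (2 * Real.pi))
    (hΔΛc : Continuous ΔΛ) (hΔΛper : Function.Periodic ΔΛ (2 * Real.pi))
    (hQeq : ∀ θ, -Ered θ = Λ θ * Q θ - Q (θ + ω) * Λ θ - ΔΛ θ)
    (hQinv : ∀ θ, IsUnit (1 + Q θ))
    (Erednew : ℝ → Matrix (Fin 4) (Fin 4) ℝ)
    (hErednew : ∀ θ, Erednew θ
      = (P (θ + ω) * (1 + Q (θ + ω)))⁻¹ * DFm θ * (P θ * (1 + Q θ)) - (Λ θ + ΔΛ θ)) :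
    (∀ θ, Erednew θ = (1 + Q (θ + ω))⁻¹ * (Ered θ * Q θ - Q (θ + ω) * ΔΛ θ)) ∧
    (⨆ θ : ℝ, opNorm (Erednew θ))
      ≤ (⨆ θ : ℝ, opNorm ((1 + Q θ)⁻¹))
        * ((⨆ θ : ℝ, opNorm (Ered θ)) * (⨆ θ : ℝ, opNorm (Q θ))
          + (⨆ θ : ℝ, opNorm (Q θ)) * (⨆ θ : ℝ, opNorm (ΔΛ θ))) :=
  stmt14_general ω DFm P Λ hΛc hΛper Ered hEred Q ΔΛ hQc hQper hΔΛc hΔΛper hQeq hQinv Erednew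
    hErednew
end
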